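/- arXiv:1802.03716 — 2 statements merged into one kernel-verified Lean document; each statement's English description precedes it below -/
import Mathlib

section
/- (NAD schema) For every Kripke model M = (S,R,V), every world s in S, and all formulas φ, ψ of the language L(∇,•,◇): if M,s ⊨ •ψ, then M,s ⊨ □φ if and only if M,s ⊨ Δφ and M,s ⊨ ∘(¬ψ → φ). Equivalently, the schema •ψ → (□φ ↔ Δφ ∧ ∘(¬ψ→φ)) is valid on the class of all Kripke models. -/
inductive Form : Type
  | atom : Nat → Form
  | neg : Form → Form
  | and : Form → Form → Form
  | nabla : Form → Form
  | bull : Form → Form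
  | dia : Form → Form

namespace Form
def imp (φ ψ : Form) : Form := neg (and φ (neg ψ))
def orf (φ ψ : Form) : Form := neg (and (neg φ) (neg ψ))
def delta (φ : Form) : Form := neg (nabla φ)
def circ (φ : Form) : Form := neg (bull φ)
def box (φ : Form) : Form := neg (dia (neg φ))
end Form

/-- `NoDia φ` says `φ` belongs to the fragment `L(∇,•)` (no occurrence of `◇`). -/
def NoDia : Form → Prop
  | .atom _ => True
  | .neg φ => NoDia φ
  | .and φ ψ => NoDia φ ∧ NoDia ψ
  | .nabla φ => NoDia φ
  | .bull φ => NoDia φ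
  | .dia _ => False

structure Model (W : Type) where
  R : W → W → Prop
  V : Nat → W → Prop

def sat {W : Type} (M : Model W) : W → Form → Prop
  | s, .atom n => M.V n s
  | s, .neg φ => ¬ sat M s φ
  | s, .and φ ψ => sat M s φ ∧ sat M s ψ
  | s, .nabla φ => ∃ t u, M.R s t ∧ M.R s u ∧ sat M t φ ∧ ¬ sat M u φ
  | s, .bull φ => sat M s φ ∧ ∃ t, M.R s t ∧ ¬ sat M t φ
  | s, .dia φ => ∃ t, M.R s t ∧ sat M t φ

theorem stmt2 (W : Type) [Nonempty W] (M : Model W) (s : W) (φ ψ : Form)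
    (h : sat M s (.bull ψ)) :
    sat M s (Form.box φ) ↔
      sat M s (Form.delta φ) ∧ sat M s (Form.circ (Form.imp (.neg ψ) φ)) := by
  obtain ⟨hsψ, t₀, hRt₀, ht₀ψ⟩ := h
  simp only [Form.box, Form.delta, Form.circ, Form.imp, sat, not_exists, not_and, not_not] at *
  constructor
  · intro hbox
    exact ⟨fun t u _ hRu _ => hbox u hRu, fun _ t hRt _ => hbox t hRt⟩
  · rintro ⟨hδ, hcirc⟩ u hRu
    by_contra huφ
    have ht₀φ : ¬ sat M t₀ φ := fun h => huφ (hδ t₀ u hRt₀ hRu h)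
    exact ht₀φ (hcirc (fun hnψ => (hnψ hsψ).elim) t₀ hRt₀ ht₀ψ)
end

section
/- Let M be the Kripke model with a single world s, with sRs, and with p true at s, and let M' be the Kripke model with a single world s', with empty accessibility relation, and with p true at s'. Then for every formula φ of L(∇,•), M,s ⊨ φ if and only if M',s' ⊨ φ; yet M,s ⊨ ◇⊤ while M',s' ⊭ ◇⊤. Consequently, the language L(∇,•) is strictly less expressive than the language L(◇) on the class of all Kripke models. -/
/-- The model with one world `s`, `sRs`, and `p` true at `s` (all variables true). -/
def Mrefl : Model Unit := ⟨fun _ _ => True, fun _ _ => True⟩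

/-- The model with one world `s'`, empty relation, and `p` true at `s'`. -/
def Mirr : Model Unit := ⟨fun _ _ => False, fun _ _ => True⟩

/-- ⊤ as the tautology `p ∨ ¬p`. -/
def topF : Form := Form.orf (.atom 0) (.neg (.atom 0))

theorem stmt3 :
    (∀ φ : Form, NoDia φ → (sat Mrefl () φ ↔ sat Mirr () φ)) ∧
    sat Mrefl () (.dia topF) ∧ ¬ sat Mirr () (.dia topF) := by
  refine ⟨?_, ⟨(), trivial, fun h => h.2 h.1⟩, ?_⟩
  · intro φ h
    induction φ with
    | atom n => simp [sat, Mrefl, Mirr]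
    | neg φ ih => simp only [sat]; rw [ih h]
    | and φ ψ ih1 ih2 => simp only [sat]; rw [ih1 h.1, ih2 h.2]
    | nabla φ ih =>
      simp only [sat, Mrefl, Mirr]
      constructor
      · rintro ⟨⟨⟩, ⟨⟩, _, _, h1, h2⟩; exact absurd h1 h2
      · rintro ⟨_, _, h, _⟩; exact h.elim
    | bull φ ih =>
      simp only [sat, Mrefl, Mirr]
      constructor
      · rintro ⟨_, ⟨⟩, _, h2⟩; exact absurd ‹sat Mrefl () φ› h2
      · rintro ⟨_, _, h, _⟩; exact h.elim
    | dia φ ih => exact h.elim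
  · rintro ⟨_, h, _⟩; exact h
end
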